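/- Let B^H be a fractional Brownian motion with Hurst index H ∈ (1/2,1) on [0,T], partition mesh δ = T/N, and ΔB^H_k = B^H_{ν_{k+1}} - B^H_{ν_k}. Then for any M > 0 and all N large enough (so that 2MT^{2H}N^{1-2H} < 1), E[exp(M·Σ_{k=0}^{N-1}(ΔB^H_k)²)] ≤ (1 - 2MT^{2H}N^{1-2H})^{-1/2}. -/

import Mathlib

/-!
Write `exp (M ∑ₖ ΔBₖ²) = ∏ₖ exp (N M ΔBₖ²) ^ (1/N)`. The generalized Hölder inequality bounds its
expectation by `∏ₖ E[exp (N M ΔBₖ²)] ^ (1/N)`, which needs no independence of the increments,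
only their common law `𝒩(0, v)`. For that law `E[exp (c X²)] = (1 - 2 c v) ^ (-1/2)` whenever
`2 c v < 1`, a Gaussian integral, and `2 N M v = 2 M T^{2H} N^{1-2H}`.
-/

open MeasureTheory ProbabilityTheory Real

lemma lintegral_exp_mul_sq_gaussianReal (v : NNReal) {c : ℝ} (h : 2 * c * v < 1) :
    ∫⁻ x, ENNReal.ofReal (exp (c * x ^ 2)) ∂gaussianReal 0 v =
      ENNReal.ofReal ((1 - 2 * c * v) ^ (-(1 : ℝ) / 2)) := by
  rcases eq_or_ne v 0 with rfl | hv
  · simp [gaussianReal_zero_var]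
  set b : ℝ := (1 - 2 * c * v) / (2 * v) with hb
  have hb_pos : 0 < b := div_pos (by linarith) (by positivity)
  have hdensity : ∀ x : ℝ, gaussianPDF 0 v x * ENNReal.ofReal (exp (c * x ^ 2)) =
      ENNReal.ofReal ((√(2 * π * v))⁻¹ * exp (-b * x ^ 2)) := by
    intro x
    rw [gaussianPDF, gaussianPDFReal, ← ENNReal.ofReal_mul (by positivity), mul_assoc,
      ← exp_add]
    congr 3
    rw [hb]
    field_simp
    ring
  rw [gaussianReal_of_var_ne_zero _ hv, lintegral_withDensity_eq_lintegral_mul _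
      (measurable_gaussianPDF 0 v) (by fun_prop)]
  simp only [Pi.mul_apply, hdensity]
  rw [← ofReal_integral_eq_lintegral_ofReal ((integrable_exp_neg_mul_sq hb_pos).const_mul _)
      (.of_forall fun x => by positivity), integral_const_mul, integral_gaussian,
    neg_div, rpow_neg (by linarith), ← sqrt_eq_rpow, ← sqrt_inv, ← sqrt_inv,
    ← sqrt_mul (by positivity), hb]
  congr 2
  field_simp

lemma lintegral_prod_le_prod_lintegral_pow_card {α ι : Type*} [MeasurableSpace α]
    {μ : Measure α} [Fintype ι] [Nonempty ι] {f : ι → α → ENNReal}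
    (hf : ∀ i, AEMeasurable (f i) μ) :
    ∫⁻ a, ∏ i, f i a ∂μ ≤ ∏ i, (∫⁻ a, f i a ^ Fintype.card ι ∂μ) ^ ((Fintype.card ι : ℝ)⁻¹) := by
  have hn : Fintype.card ι ≠ 0 := Fintype.card_ne_zero
  convert ENNReal.lintegral_prod_norm_pow_le Finset.univ
    (f := fun i a => f i a ^ Fintype.card ι) (fun i _ => (hf i).pow_const _)
    (p := fun _ => ((Fintype.card ι : ℝ)⁻¹)) ?_ (fun _ _ => by positivity) using 4 with a
  · exact (ENNReal.pow_rpow_inv_natCast hn _).symm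
  · simp [hn]

lemma lintegral_exp_mul_sum_sq_le {Ω ι : Type*} [MeasurableSpace Ω] {P : Measure Ω}
    [Fintype ι] [Nonempty ι] {X : ι → Ω → ℝ} {v : NNReal}
    (hX : ∀ i, HasLaw (X i) (gaussianReal 0 v) P) {M : ℝ}
    (h : 2 * (Fintype.card ι * M) * v < 1) :
    ∫⁻ ω, ENNReal.ofReal (exp (M * ∑ i, X i ω ^ 2)) ∂P ≤
      ENNReal.ofReal ((1 - 2 * (Fintype.card ι * M) * v) ^ (-(1 : ℝ) / 2)) := by
  set n := Fintype.card ι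
  have hn : n ≠ 0 := Fintype.card_ne_zero
  have hsplit : ∀ ω, ENNReal.ofReal (exp (M * ∑ i, X i ω ^ 2)) =
      ∏ i, ENNReal.ofReal (exp (M * X i ω ^ 2)) := fun ω => by
    rw [Finset.mul_sum, exp_sum, ENNReal.ofReal_prod_of_nonneg fun i _ => (exp_pos _).le]
  have hpow : ∀ i ω, ENNReal.ofReal (exp (M * X i ω ^ 2)) ^ n =
      ENNReal.ofReal (exp (n * M * X i ω ^ 2)) := fun i ω => by
    rw [← ENNReal.ofReal_pow (exp_pos _).le, ← exp_nat_mul, mul_assoc]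
  have hmoment : ∀ i, ∫⁻ ω, ENNReal.ofReal (exp (n * M * X i ω ^ 2)) ∂P =
      ENNReal.ofReal ((1 - 2 * (n * M) * v) ^ (-(1 : ℝ) / 2)) := fun i => by
    rw [← lintegral_exp_mul_sq_gaussianReal v h]
    exact (hX i).lintegral_comp (f := fun x => ENNReal.ofReal (exp (n * M * x ^ 2))) (by fun_prop)
  calc ∫⁻ ω, ENNReal.ofReal (exp (M * ∑ i, X i ω ^ 2)) ∂P
      ≤ ∏ i, (∫⁻ ω, ENNReal.ofReal (exp (M * X i ω ^ 2)) ^ n ∂P) ^ (n⁻¹ : ℝ) := by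
        simp only [hsplit]
        exact lintegral_prod_le_prod_lintegral_pow_card fun i =>
          (hX i).aemeasurable.pow_const 2 |>.const_mul M |>.exp.ennreal_ofReal
    _ = ENNReal.ofReal ((1 - 2 * (n * M) * v) ^ (-(1 : ℝ) / 2)) := by
        simp only [hpow, hmoment, Finset.prod_const, Finset.card_univ]
        exact ENNReal.rpow_inv_natCast_pow hn _

theorem fbm_increments_exp_sq_sum_general {Ω : Type*} [MeasureSpace Ω]
    (T H : ℝ) (hT : 0 < T)
    (N : ℕ) (hN : 0 < N) (M : ℝ)
    (h2M : 2 * M * T ^ (2 * H) * (N : ℝ) ^ (1 - 2 * H) < 1)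
    (v : NNReal) (hv : (v : ℝ) = (T / N) ^ (2 * H))
    (ΔB : Fin N → Ω → ℝ)
    (hlaw : ∀ k, Measure.map (ΔB k) ℙ = gaussianReal 0 v) :
    ∫ ω, Real.exp (M * ∑ k, (ΔB k ω) ^ 2) ≤
      (1 - 2 * M * T ^ (2 * H) * (N : ℝ) ^ (1 - 2 * H)) ^ (-(1 : ℝ) / 2) := by
  have hN' : (0 : ℝ) < N := Nat.cast_pos.mpr hN
  have : Nonempty (Fin N) := ⟨⟨0, hN⟩⟩
  have hscale : 2 * (Fintype.card (Fin N) * M) * v =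
      2 * M * T ^ (2 * H) * (N : ℝ) ^ (1 - 2 * H) := by
    rw [Fintype.card_fin, hv, div_rpow hT.le hN'.le, rpow_sub hN', rpow_one]
    field_simp
  have hΔB : ∀ k, HasLaw (ΔB k) (gaussianReal 0 v) ℙ := fun k =>
    ⟨.of_map_ne_zero (by rw [hlaw k]; exact IsProbabilityMeasure.ne_zero _), hlaw k⟩
  have hbound := lintegral_exp_mul_sum_sq_le hΔB (hscale ▸ h2M)
  rw [hscale] at hbound
  rw [integral_eq_lintegral_of_nonneg_ae (.of_forall fun ω => (exp_pos _).le)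
    (by have := fun k => (hΔB k).aemeasurable; fun_prop)]
  exact ENNReal.toReal_le_of_le_ofReal (rpow_nonneg (by linarith) _) hbound

/-- The increments `ΔB k` of a fractional Brownian motion with Hurst index `H ∈ (1/2,1)`
over a uniform partition of `[0,T]` with mesh `δ = T/N` are centered Gaussians with
variance `δ^(2H)` (they are not independent). -/
theorem fbm_increments_exp_sq_sum {Ω : Type*} [MeasureSpace Ω] [IsProbabilityMeasure (ℙ : Measure Ω)]
    (T H : ℝ) (hT : 0 < T) (hH : 1 / 2 < H) (hH1 : H < 1)
    (N : ℕ) (hN : 0 < N) (M : ℝ) (hM : 0 < M)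
    (h2M : 2 * M * T ^ (2 * H) * (N : ℝ) ^ (1 - 2 * H) < 1)
    (v : NNReal) (hv : (v : ℝ) = (T / N) ^ (2 * H))
    (ΔB : Fin N → Ω → ℝ) (hmeas : ∀ k, Measurable (ΔB k))
    (hlaw : ∀ k, Measure.map (ΔB k) ℙ = gaussianReal 0 v) :
    ∫ ω, Real.exp (M * ∑ k, (ΔB k ω) ^ 2) ≤
      (1 - 2 * M * T ^ (2 * H) * (N : ℝ) ^ (1 - 2 * H)) ^ (-(1 : ℝ) / 2) :=
  fbm_increments_exp_sq_sum_general T H hT N hN M h2M v hv ΔB hlaw
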